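/- arXiv:1103.0286 — 2 statements merged into one kernel-verified Lean document; each statement's English description precedes it below -/
import Mathlib

section
/- Let d ≥ 2. Define, for each n = (n_2,…,n_d) ∈ {0,1,2,3}^{d-1} with n_1 := 0, the vector |ψ(n)⟩ = Σ_{j=1}^d i^{n_j}|j⟩ ∈ ℂ^d and the diagonal unitary σ_z(n) = Σ_{j=1}^d (-1)^{n_j}|j⟩⟨j|. Then the operators E_j = (1/√(d+1))|j⟩⟨j| for j = 1,…,d together with E_n = (1/√(4^{d-1}(d+1)))|ψ(n)⟩⟨ψ(n)|σ_z(n) satisfy the completeness relation Σ_j E_j†E_j + Σ_n E_n†E_n = I on ℂ^d. -/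
/-!
Since `(-i)^k (-1)^k = i^k`, the operator `|ψ(n)⟩⟨ψ(n)|σ_z(n)` is `|ψ(n)⟩⟨ψ̄(n)|`, so with
`⟨ψ|ψ⟩ = d` one gets `E_n†E_n = d / (4^{d-1}(d+1)) · |ψ̄(n)⟩⟨ψ̄(n)|`. The entry `(p, q)` of
`|ψ̄(n)⟩⟨ψ̄(n)|` is the character `i^{n_q - n_p}` of the group `{n | n_1 = 0}`, so summing over
its `4^{d-1}` elements gives `4^{d-1} I`. Together with `Σ_j E_j†E_j = I/(d+1)` the total is
`(1/(d+1) + d/(d+1)) I = I`.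
-/

open Complex Matrix

/-- `|ψ(n)⟩⟨ψ(n)|` where `|ψ(n)⟩ = Σ_j i^{n_j}|j⟩`. -/
noncomputable def psiProj (d : ℕ) (n : Fin d → Fin 4) : Matrix (Fin d) (Fin d) ℂ :=
  Matrix.of fun p q => Complex.I ^ (n p : ℕ) * (-Complex.I) ^ (n q : ℕ)

/-- `σ_z(n) = Σ_j (-1)^{n_j}|j⟩⟨j|`. -/
noncomputable def sigmaZ (d : ℕ) (n : Fin d → Fin 4) : Matrix (Fin d) (Fin d) ℂ :=
  Matrix.diagonal fun j => (-1 : ℂ) ^ (n j : ℕ)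

/-- The rank-one Kraus operator `E_n = (1/√(4^{d-1}(d+1)))|ψ(n)⟩⟨ψ(n)|σ_z(n)`. -/
noncomputable def krausPsi (d : ℕ) (n : Fin d → Fin 4) : Matrix (Fin d) (Fin d) ℂ :=
  ((1 : ℂ) / (Real.sqrt (4 ^ (d - 1) * (d + 1)) : ℝ)) • (psiProj d n * sigmaZ d n)

/-- The rank-one Kraus operator `E_j = (1/√(d+1))|j⟩⟨j|`. -/
noncomputable def krausDiag (d : ℕ) (j : Fin d) : Matrix (Fin d) (Fin d) ℂ :=
  ((1 : ℂ) / (Real.sqrt (d + 1) : ℝ)) • Matrix.single j j (1 : ℂ)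

open Finset

theorem Finset.sum_eq_zero_of_equiv_mul {α R : Type*} [Ring R] [NoZeroDivisors R]
    {s : Finset α} {f : α → R} (e : α ≃ α) (he : ∀ a, a ∈ s ↔ e a ∈ s) {c : R} (hc : c ≠ 1)
    (hf : ∀ a, f (e a) = c * f a) :
    ∑ a ∈ s, f a = 0 := by
  have hsum : ∑ a ∈ s, f a = c * ∑ a ∈ s, f a := by
    rw [mul_sum]
    exact (sum_equiv e he fun a _ => (hf a).symm).symm
  by_contra hne
  exact hc (mul_right_cancel₀ hne (by rw [one_mul, ← hsum]))

theorem pow_finVal_add_of_pow_eq_one {M : Type*} [Monoid M] {m : ℕ} [NeZero m] {x : M}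
    (hx : x ^ m = 1) (a b : Fin m) :
    x ^ ((a + b : Fin m) : ℕ) = x ^ (a : ℕ) * x ^ (b : ℕ) := by
  rw [Fin.val_add, ← pow_eq_pow_mod _ hx, pow_add]

theorem conjTranspose_smul_mul_smul {m n α : Type*} [Fintype m] [CommRing α] [StarRing α]
    (c : α) (A : Matrix m n α) :
    (c • A)ᴴ * (c • A) = (star c * c) • (Aᴴ * A) := by
  rw [conjTranspose_smul, Matrix.smul_mul, Matrix.mul_smul, smul_smul]

theorem star_one_div_sqrt_mul_self (x : ℝ) (hx : 0 ≤ x) :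
    star ((1 : ℂ) / (Real.sqrt x : ℝ)) * ((1 : ℂ) / (Real.sqrt x : ℝ)) = (x : ℂ)⁻¹ := by
  rw [Complex.star_def, map_div₀, map_one, conj_ofReal, div_mul_div_comm, one_mul,
    ← ofReal_mul, Real.mul_self_sqrt hx, one_div]

/-- The vector `|ψ(n)⟩`. -/
def phase {ι : Type*} (n : ι → Fin 4) : ι → ℂ :=
  fun j => I ^ (n j : ℕ)

theorem phase_add_single_self {ι : Type*} [DecidableEq ι] (n : ι → Fin 4) (k : ι) :
    phase (n + Pi.single k 1) k = I * phase n k := by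
  rw [phase, phase, Pi.add_apply, Pi.single_eq_same,
    pow_finVal_add_of_pow_eq_one I_pow_four, Fin.val_one, pow_one, mul_comm]

theorem phase_add_single_of_ne {ι : Type*} [DecidableEq ι] (n : ι → Fin 4) {j k : ι}
    (h : j ≠ k) : phase (n + Pi.single k 1) j = phase n j := by
  rw [phase, phase, Pi.add_apply, Pi.single_eq_of_ne h, add_zero]

theorem star_phase_mul_phase {ι : Type*} (n : ι → Fin 4) (j : ι) :
    star (phase n j) * phase n j = 1 := by
  rw [phase, star_pow, ← mul_pow, Complex.star_def, conj_I, neg_mul, I_mul_I, neg_neg, one_pow]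

theorem star_phase_dotProduct_phase {ι : Type*} [Fintype ι] (n : ι → Fin 4) :
    star (phase n) ⬝ᵥ phase n = Fintype.card ι := by
  simp only [dotProduct, Pi.star_apply, star_phase_mul_phase, sum_const, card_univ,
    nsmul_eq_mul, mul_one]

theorem Fintype.card_filter_apply_eq {ι κ : Type*} [Fintype ι] [DecidableEq ι] [Fintype κ]
    [DecidableEq κ] (i : ι) (a : κ) :
    #{f : ι → κ | f i = a} = Fintype.card κ ^ (Fintype.card ι - 1) := by
  simpa [Fintype.piFinset_univ] using Fintype.card_filter_piFinset_const (ι := ι) univ i a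

/-- Shifting a coordinate `k ≠ z` by one multiplies the summand by `±i ≠ 1`. -/
theorem sum_star_phase_mul_phase_of_ne {ι : Type*} [Fintype ι] [DecidableEq ι] (z : ι) {p q : ι}
    (hpq : p ≠ q) :
    ∑ n ∈ univ.filter (fun n : ι → Fin 4 => n z = 0), star (phase n p) * phase n q = 0 := by
  have shift : ∀ k ≠ z, ∀ c : ℂ, c ≠ 1 →
      (∀ n : ι → Fin 4, star (phase (n + Pi.single k 1) p) * phase (n + Pi.single k 1) q
        = c * (star (phase n p) * phase n q)) →
      ∑ n ∈ univ.filter (fun n : ι → Fin 4 => n z = 0), star (phase n p) * phase n q = 0 := by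
    intro k hk c hc hF
    refine sum_eq_zero_of_equiv_mul (Equiv.addRight (Pi.single k 1)) (fun n => ?_) hc hF
    simp [Pi.single_eq_of_ne hk.symm]
  by_cases hp : p = z
  · refine shift q (fun hq => hpq (hp.trans hq.symm)) I (by simp [Complex.ext_iff]) fun n => ?_
    rw [phase_add_single_of_ne n hpq, phase_add_single_self]
    ring
  · refine shift p hp (-I) (by simp [Complex.ext_iff]) fun n => ?_
    rw [phase_add_single_of_ne n (Ne.symm hpq), phase_add_single_self, star_mul',
      Complex.star_def, conj_I]
    ring

theorem sum_vecMulVec_star_phase_phase {ι : Type*} [Fintype ι] [DecidableEq ι] (z : ι) :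
    ∑ n ∈ univ.filter (fun n : ι → Fin 4 => n z = 0), vecMulVec (star (phase n)) (phase n)
      = ((4 : ℂ) ^ (Fintype.card ι - 1)) • 1 := by
  ext p q
  simp only [Matrix.sum_apply, vecMulVec_apply, Pi.star_apply, Matrix.smul_apply, one_apply,
    smul_eq_mul]
  by_cases hpq : p = q
  · subst hpq
    simp only [star_phase_mul_phase, sum_const, Fintype.card_filter_apply_eq, if_true, mul_one,
      Fintype.card_fin, nsmul_eq_mul, Nat.cast_pow, Nat.cast_ofNat]
  · rw [if_neg hpq, mul_zero, sum_star_phase_mul_phase_of_ne z hpq]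

theorem psiProj_mul_sigmaZ (d : ℕ) (n : Fin d → Fin 4) :
    psiProj d n * sigmaZ d n = vecMulVec (phase n) (phase n) := by
  ext p q
  simp only [psiProj, sigmaZ, mul_diagonal, of_apply, vecMulVec_apply, phase, mul_assoc, ← mul_pow]
  ring_nf

theorem conjTranspose_krausPsi_mul_self (d : ℕ) (n : Fin d → Fin 4) :
    (krausPsi d n)ᴴ * krausPsi d n
      = (((4 : ℂ) ^ (d - 1) * (d + 1))⁻¹ * d) • vecMulVec (star (phase n)) (phase n) := by
  rw [krausPsi, conjTranspose_smul_mul_smul, star_one_div_sqrt_mul_self _ (by positivity),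
    psiProj_mul_sigmaZ, conjTranspose_vecMulVec, vecMulVec_mul_vecMulVec,
    star_phase_dotProduct_phase, Fintype.card_fin, vecMulVec_smul, smul_smul]
  push_cast
  rfl

theorem sum_conjTranspose_krausDiag_mul_self (d : ℕ) :
    ∑ j : Fin d, (krausDiag d j)ᴴ * krausDiag d j = ((d : ℂ) + 1)⁻¹ • 1 := by
  simp_rw [krausDiag, conjTranspose_smul_mul_smul,
    star_one_div_sqrt_mul_self ((d : ℝ) + 1) (by positivity),
    conjTranspose_single, star_one, single_mul_single_same, one_mul, ← smul_sum,
    sum_single_one]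
  push_cast
  rfl

/-- Completeness relation for the Kraus operators of the complementary channel of the
`1 → 2` universal qudit cloner: `Σ_j E_j†E_j + Σ_n E_n†E_n = I`. -/
theorem kraus_completeness (d : ℕ) (hd : 2 ≤ d) :
    (∑ j : Fin d, (krausDiag d j)ᴴ * krausDiag d j)
      + ∑ n ∈ Finset.univ.filter (fun n : Fin d → Fin 4 => n ⟨0, by omega⟩ = 0),
          (krausPsi d n)ᴴ * krausPsi d n
      = (1 : Matrix (Fin d) (Fin d) ℂ) := by
  simp_rw [sum_conjTranspose_krausDiag_mul_self, conjTranspose_krausPsi_mul_self, ← smul_sum,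
    sum_vecMulVec_star_phase_phase, Fintype.card_fin, smul_smul, ← add_smul]
  convert one_smul ℂ (1 : Matrix (Fin d) (Fin d) ℂ)
  field_simp
  ring
end

section
/- Let d ≥ 2 and let A_1,…,A_m be rank-one operators on ℂ^d with Σ A_i† A_i = I, defining the channel N(ρ) = Σ A_i ρ A_i†. Then N is entanglement-breaking: for the maximally entangled state |Φ⟩ = (1/√d)Σ_i |i⟩|i⟩, the state (id ⊗ N)(|Φ⟩⟨Φ|) is separable, i.e., a convex combination of product states. -/
/-!
Writing `Aᵢ = uᵢ vᵢᵀ`, the Choi state is `(1/d) Σᵢ (vᵢ vᵢᴴ) ⊗ (uᵢ uᵢᴴ)`, a sum of Kronecker products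
of positive semidefinite matrices. Normalizing each factor to trace one leaves nonnegative weights,
and they sum to one because the trace of the Choi state is `tr (Σᵢ Aᵢᴴ Aᵢ) / d = tr 1 / d = 1`.
-/

open Matrix
open scoped ComplexOrder Kronecker

namespace Matrix

section Density

variable {n 𝕜 : Type*} [Fintype n] [RCLike 𝕜]

theorem exists_posSemidef_trace_eq_one [Nonempty n] :
    ∃ ρ : Matrix n n 𝕜, ρ.PosSemidef ∧ ρ.trace = 1 := by
  classical
  obtain ⟨i⟩ := ‹Nonempty n›
  exact ⟨vecMulVec (Pi.single i 1) (star (Pi.single i 1)), posSemidef_vecMulVec_self_star _,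
    by simp⟩

theorem PosSemidef.exists_eq_ofReal_smul [Nonempty n] {P : Matrix n n 𝕜} (hP : P.PosSemidef) :
    ∃ (r : ℝ) (ρ : Matrix n n 𝕜), 0 ≤ r ∧ (ρ.PosSemidef ∧ ρ.trace = 1) ∧ P = (r : 𝕜) • ρ := by
  obtain ⟨r, hr, htr⟩ := RCLike.nonneg_iff_exists_ofReal.mp hP.trace_nonneg
  rcases hr.eq_or_lt with rfl | hr
  · obtain ⟨ρ, hρ⟩ := exists_posSemidef_trace_eq_one (n := n) (𝕜 := 𝕜)
    refine ⟨0, ρ, le_rfl, hρ, ?_⟩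
    simpa [eq_comm] using hP.trace_eq_zero_iff.mp (by simpa [eq_comm] using htr)
  · have hr' : (r : 𝕜) ≠ 0 := RCLike.ofReal_ne_zero.mpr hr.ne'
    refine ⟨r, (r⁻¹ : 𝕜) • P, hr.le, ⟨hP.smul ?_, ?_⟩, ?_⟩
    · exact (RCLike.inv_pos.mpr (RCLike.ofReal_pos.mpr hr)).le
    · rw [trace_smul, ← htr, smul_eq_mul, inv_mul_cancel₀ hr']
    · rw [smul_smul, mul_inv_cancel₀ hr', one_smul]

end Density

section Vec

variable {m n R : Type*}

theorem vecMulVec_vec_vecMulVec [CommSemiring R] (u w : m → R) (v z : n → R) :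
    vecMulVec (vec (vecMulVec u v)) (vec (vecMulVec w z)) = vecMulVec v z ⊗ₖ vecMulVec u w := by
  ext x y
  simp only [vecMulVec_apply, vec, kroneckerMap_apply]
  ring

theorem star_vec_vecMulVec [CommSemiring R] [StarRing R] (u : m → R) (v : n → R) :
    star (vec (vecMulVec u v)) = vec (vecMulVec (star u) (star v)) := by
  ext x
  simp [vecMulVec_apply]

theorem trace_sum_vecMulVec_vec_star {ι : Type*} [Fintype ι] [Fintype m] [Fintype n]
    [CommSemiring R] [StarRing R] (A : ι → Matrix m n R) :
    (∑ i, vecMulVec (vec (A i)) (star (vec (A i)))).trace = (∑ i, (A i)ᴴ * A i).trace := by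
  simp only [trace_sum, trace_vecMulVec, dotProduct_comm _ (star _), star_vec_dotProduct_vec]

end Vec

end Matrix

section Separable

variable {m n : Type*} [Fintype m] [Fintype n]

def IsSeparableState (ρ : Matrix (m × n) (m × n) ℂ) : Prop :=
  ∃ (T : ℕ) (w : Fin T → ℝ) (σ : Fin T → Matrix m m ℂ) (τ : Fin T → Matrix n n ℂ),
    (∀ t, 0 ≤ w t) ∧ (∑ t, w t = 1)
      ∧ (∀ t, (σ t).PosSemidef ∧ (σ t).trace = 1)
      ∧ (∀ t, (τ t).PosSemidef ∧ (τ t).trace = 1)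
      ∧ ρ = ∑ t, (w t : ℂ) • (σ t ⊗ₖ τ t)

theorem isSeparableState_sum_kronecker [Nonempty m] [Nonempty n] {T : ℕ}
    (P : Fin T → Matrix m m ℂ) (Q : Fin T → Matrix n n ℂ) (hP : ∀ t, (P t).PosSemidef)
    (hQ : ∀ t, (Q t).PosSemidef) (htr : (∑ t, P t ⊗ₖ Q t).trace = 1) :
    IsSeparableState (∑ t, P t ⊗ₖ Q t) := by
  choose p σ hp hσ hPσ using fun t => (hP t).exists_eq_ofReal_smul
  choose q τ hq hτ hQτ using fun t => (hQ t).exists_eq_ofReal_smul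
  have hterm : ∀ t, P t ⊗ₖ Q t = ((p t * q t : ℝ) : ℂ) • (σ t ⊗ₖ τ t) := fun t => by
    rw [hPσ, hQτ, smul_kronecker, kronecker_smul, smul_smul, ← RCLike.ofReal_mul, mul_comm]
    rfl -- `RCLike.ofReal` and `Complex.ofReal` agree only after unfolding
  refine ⟨T, fun t => p t * q t, σ, τ, fun t => mul_nonneg (hp t) (hq t), ?_, hσ, hτ,
    Finset.sum_congr rfl fun t _ => hterm t⟩
  simp only [Finset.sum_congr rfl fun t _ => hterm t, trace_sum, trace_smul, trace_kronecker,
    (hσ _).2, (hτ _).2, mul_one, smul_eq_mul] at htr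
  exact_mod_cast htr

end Separable

/-- `(id ⊗ N)(|Φ⟩⟨Φ|)` for the channel `N ρ = Σᵢ Aᵢ ρ Aᵢᴴ` and `Φ` maximally entangled. -/
noncomputable def choiState {d : ℕ} {ι : Type*} [Fintype ι] (A : ι → Matrix (Fin d) (Fin d) ℂ) :
    Matrix (Fin d × Fin d) (Fin d × Fin d) ℂ :=
  of fun x y => (1 / (d : ℂ)) * ∑ i, A i x.2 x.1 * starRingEnd ℂ (A i y.2 y.1)

section Choi

variable {d : ℕ} {ι : Type*} [Fintype ι] (A : ι → Matrix (Fin d) (Fin d) ℂ)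

theorem choiState_eq_smul_sum :
    choiState A = (1 / (d : ℂ)) • ∑ i, vecMulVec (vec (A i)) (star (vec (A i))) := by
  ext x y
  simp [choiState, vecMulVec_apply, Matrix.sum_apply]

theorem trace_choiState [NeZero d] (hcomp : ∑ i, (A i)ᴴ * A i = 1) :
    (choiState A).trace = 1 := by
  rw [choiState_eq_smul_sum, trace_smul, trace_sum_vecMulVec_vec_star, hcomp, trace_one,
    Fintype.card_fin, smul_eq_mul, one_div_mul_cancel (NeZero.ne _)]

end Choi

/-- A channel with rank-one Kraus operators is entanglement-breaking: the Choi state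
`(id ⊗ N)(|Φ⟩⟨Φ|)`, with entries `((a,b),(c,e)) ↦ (1/d)Σ_i (A_i)_{b,a}·conj((A_i)_{e,c})`,
is a convex combination of product states. -/
theorem rank_one_kraus_entanglement_breaking (d m : ℕ) (hd : 2 ≤ d)
    (A : Fin m → Matrix (Fin d) (Fin d) ℂ)
    (hrank : ∀ i, ∃ u v : Fin d → ℂ, A i = Matrix.of fun a b => u a * v b)
    (hcomp : ∑ i, (A i)ᴴ * A i = 1) :
    ∃ (T : ℕ) (w : Fin T → ℝ) (σ τ : Fin T → Matrix (Fin d) (Fin d) ℂ),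
      (∀ t, 0 ≤ w t) ∧ (∑ t, w t = 1)
      ∧ (∀ t, (σ t).PosSemidef ∧ (σ t).trace = 1)
      ∧ (∀ t, (τ t).PosSemidef ∧ (τ t).trace = 1)
      ∧ (Matrix.of fun x y : Fin d × Fin d =>
            (1 / (d : ℂ)) * ∑ i, (A i) x.2 x.1 * (starRingEnd ℂ) ((A i) y.2 y.1))
          = ∑ t, (w t : ℂ) • (σ t ⊗ₖ τ t) := by
  choose u v hA using hrank
  replace hA : ∀ i, A i = vecMulVec (u i) (v i) := hA
  have : NeZero d := ⟨by omega⟩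
  have hdecomp : choiState A = ∑ i,
      ((1 / (d : ℂ)) • vecMulVec (v i) (star (v i))) ⊗ₖ vecMulVec (u i) (star (u i)) := by
    simp only [choiState_eq_smul_sum, hA, star_vec_vecMulVec, vecMulVec_vec_vecMulVec,
      Finset.smul_sum, smul_kronecker]
  show IsSeparableState (choiState A)
  rw [hdecomp]
  exact isSeparableState_sum_kronecker _ _
    (fun i => (posSemidef_vecMulVec_self_star _).smul (by positivity))
    (fun i => posSemidef_vecMulVec_self_star _) (hdecomp ▸ trace_choiState A hcomp)
end
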